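/- arXiv:2101.00437 — 2 statements merged into one kernel-verified Lean document; each statement's English description precedes it below -/
import Mathlib

section
/- Let M be a locally open-convex compact topological median algebra, and let U, C ⊆ M be disjoint nonempty convex sets with U open and C closed. Then there exists an open half-space 𝔥 with U ⊆ 𝔥 and C ⊆ M \ 𝔥. -/
def MedInterval {M : Type*} (m : M → M → M → M) (x y : M) : Set M := {u | m x y u = u}

def MedConvex {M : Type*} (m : M → M → M → M) (C : Set M) : Prop :=
  ∀ x ∈ C, ∀ y ∈ C, MedInterval m x y ⊆ C

def IsMedian {M : Type*} (m : M → M → M → M) : Prop :=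
  (∀ x y z, m x y z = m x z y) ∧ (∀ x y z, m x y z = m y x z) ∧
  (∀ x y, m x x y = x) ∧
  (∀ x y z u v, m (m x y z) u v = m x (m y u v) (m z u v))

def IsHalfSpace {M : Type*} (m : M → M → M → M) (h : Set M) : Prop :=
  MedConvex m h ∧ MedConvex m hᶜ ∧ h.Nonempty ∧ hᶜ.Nonempty

/-- Every point has a neighborhood basis of open convex sets. -/
def LocOpenConvex {M : Type*} [TopologicalSpace M] (m : M → M → M → M) : Prop :=
  ∀ x : M, ∀ U ∈ nhds x, ∃ V : Set M, IsOpen V ∧ MedConvex m V ∧ x ∈ V ∧ V ⊆ U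

/-!
By Zorn's lemma there is a closed convex set `K ⊇ C` disjoint from `U` and maximal with these
properties; its complement is the half-space. For `x ∉ K` the join `⋃_{k ∈ K} [k, x]` is convex,
hence so is its closure, which is strictly larger than `K`; by maximality it meets `U`, and since
`U` is open, already the join meets `U`. Now if `w ∈ [a, b] ∩ K` with `a, b ∉ K`, pick
`u₁ ∈ [k₁, a] ∩ U` and `u₂ ∈ [k₂, b] ∩ U` with `kᵢ ∈ K`: the point `q = m u₁ u₂ w` lies in `U`,
and a median computation puts it in `[m k₁ k₂ q, w] ⊆ K`, a contradiction. So `Kᶜ` is convex.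
-/

def MedJoin {M : Type*} (m : M → M → M → M) (K : Set M) (x : M) : Set M :=
  {t | ∃ k ∈ K, t ∈ MedInterval m k x}

section MedianAlgebra

variable {M : Type*} {m : M → M → M → M}

lemma mem_medInterval {x y u : M} : u ∈ MedInterval m x y ↔ m x y u = u := Iff.rfl

namespace IsMedian

lemma comm_right (hm : IsMedian m) (x y z : M) : m x y z = m x z y := hm.1 x y z

lemma comm_left (hm : IsMedian m) (x y z : M) : m x y z = m y x z := hm.2.1 x y z

lemma majority (hm : IsMedian m) (x y : M) : m x x y = x := hm.2.2.1 x y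

lemma distrib (hm : IsMedian m) (x y z u v : M) :
    m (m x y z) u v = m x (m y u v) (m z u v) := hm.2.2.2 x y z u v

lemma rotate (hm : IsMedian m) (x y z : M) : m x y z = m z x y := by
  rw [hm.comm_left x y z, hm.comm_right y x z, hm.comm_left y z x, hm.comm_right z y x]

lemma majority_mid (hm : IsMedian m) (x y : M) : m x y x = x := by
  rw [hm.comm_right x y x, hm.majority x y]

lemma majority_right (hm : IsMedian m) (x y : M) : m x y y = y := by
  rw [hm.comm_left x y y, hm.majority_mid y x]

lemma medInterval_comm (hm : IsMedian m) (x y : M) : MedInterval m x y = MedInterval m y x := by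
  ext u
  rw [mem_medInterval, mem_medInterval, hm.comm_left x y]

lemma left_mem_medInterval (hm : IsMedian m) (x y : M) : x ∈ MedInterval m x y :=
  hm.majority_mid x y

lemma right_mem_medInterval (hm : IsMedian m) (x y : M) : y ∈ MedInterval m x y :=
  hm.majority_right x y

lemma median_mem_medInterval (hm : IsMedian m) (x y z : M) : m x y z ∈ MedInterval m x y := by
  rw [mem_medInterval, hm.rotate x y z, hm.rotate x y (m z x y), hm.distrib z x y x y,
    hm.majority x y, hm.majority_mid y x]

lemma median_mem_medInterval_left (hm : IsMedian m) (x y z : M) :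
    m x y z ∈ MedInterval m x z := by
  rw [hm.comm_right x y z]
  exact hm.median_mem_medInterval x z y

lemma mem_medInterval_median_iff (hm : IsMedian m) {x y a t : M} :
    t ∈ MedInterval m (m x y t) a ↔ t ∈ MedInterval m x (m y a t) := by
  rw [mem_medInterval, mem_medInterval, hm.distrib x y t a t, hm.majority_mid t a]

lemma medInterval_subset (hm : IsMedian m) {x y c : M} (hc : c ∈ MedInterval m x y) :
    MedInterval m x c ⊆ MedInterval m x y := by
  intro w hw
  have hxw : m x (m x y w) w = w := by
    refine Eq.trans ?_ hw
    conv_rhs => rw [← hc]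
    rw [hm.comm_left x (m x y c) w, hm.distrib x y c x w, hm.comm_left y x w, hm.comm_left c x w,
      hw]
  have hyw : m (m x y w) y w = m x y w := by
    rw [hm.distrib x y w y w, hm.majority y w, hm.majority_mid w y]
  calc m x y w = m x (m (m x y w) y w) w := by
        rw [hm.comm_left x (m (m x y w) y w) w, hm.distrib (m x y w) y w x w, hm.comm_left y x w,
          hm.majority_mid w x, hm.majority (m x y w) w]
    _ = m x (m x y w) w := by rw [hyw]
    _ = w := hxw

lemma medConvex_medInterval (hm : IsMedian m) (x y : M) : MedConvex m (MedInterval m x y) := by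
  intro u hu v hv w hw
  have hyvw : m y v w ∈ MedInterval m x y := by
    rw [mem_medInterval]
    conv_rhs => rw [← hv]
    rw [hm.comm_left y (m x y v) w, hm.distrib x y v y w, hm.majority y w, hm.comm_left v y w]
  refine hm.medInterval_subset hyvw ?_
  rw [mem_medInterval]
  conv_rhs => rw [← hw, ← hu]
  rw [hm.distrib x y u v w, hw]

lemma mem_medInterval_median_of_mem (hm : IsMedian m) {x y p t : M}
    (hx : t ∈ MedInterval m x p) (hy : t ∈ MedInterval m y p) :
    t ∈ MedInterval m (m x y p) p := by
  rw [mem_medInterval, hm.distrib x y p p t, hy, hm.majority p t, hm.comm_right x t p, hx]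

lemma eq_median_of_mem_medInterval (hm : IsMedian m) {x y z r : M}
    (hxy : r ∈ MedInterval m x y) (hyz : r ∈ MedInterval m y z) (hzx : r ∈ MedInterval m z x) :
    r = m x y z := by
  have hx : r ∈ MedInterval m x (m x y z) := by
    rw [mem_medInterval]
    conv_rhs => rw [← hzx, ← hxy]
    rw [hm.rotate z x (m x y r), hm.distrib x y r z x, hm.rotate y z x, ← hm.rotate z x r, hzx]
  have hy : r ∈ MedInterval m y (m x y z) := by
    rw [mem_medInterval]
    conv_rhs => rw [← hxy, ← hyz]
    rw [hm.rotate x y (m y z r), hm.distrib y z r x y, ← hm.rotate x y z, ← hm.rotate x y r, hxy]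
  have h := hm.mem_medInterval_median_of_mem hx hy
  rw [mem_medInterval, hm.median_mem_medInterval x y z, hm.majority (m x y z) r] at h
  exact h.symm

/-- `m x y` is the gate map onto `[x, y]`. -/
lemma median_mem_medInterval_of_mem (hm : IsMedian m) {x y u : M} (hu : u ∈ MedInterval m x y)
    (t : M) : m x y t ∈ MedInterval m t u := by
  have hg_tx : m x y t ∈ MedInterval m t x := by
    rw [hm.medInterval_comm]; exact hm.median_mem_medInterval_left x y t
  have hg_ty : m x y t ∈ MedInterval m t y := by
    rw [hm.medInterval_comm, hm.comm_left x y t]; exact hm.median_mem_medInterval_left y x t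
  have hg'_tg : m t u (m x y t) ∈ MedInterval m t (m x y t) := hm.median_mem_medInterval_left t u _
  have hg'_ug : m t u (m x y t) ∈ MedInterval m u (m x y t) := by
    rw [hm.comm_left t u]; exact hm.median_mem_medInterval_left u t _
  have hg'_xy : m t u (m x y t) ∈ MedInterval m x y :=
    hm.medConvex_medInterval x y u hu _ (hm.median_mem_medInterval x y t) hg'_ug
  have hg'_yt : m t u (m x y t) ∈ MedInterval m y t := by
    rw [hm.medInterval_comm]; exact hm.medInterval_subset hg_ty hg'_tg
  exact hm.eq_median_of_mem_medInterval hg'_xy hg'_yt (hm.medInterval_subset hg_tx hg'_tg)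

lemma mem_medInterval_of_mem_of_mem (hm : IsMedian m) {x a t b : M}
    (ht : t ∈ MedInterval m x a) (hb : b ∈ MedInterval m t a) : t ∈ MedInterval m x b := by
  rw [mem_medInterval]
  conv_lhs => rw [← hb]
  rw [hm.comm_left x (m t a b) t, hm.distrib t a b x t, hm.comm_left a x t, ht,
    hm.majority t (m b x t)]

lemma mem_medInterval_median_of_mem_medInterval (hm : IsMedian m) {k c u w q : M}
    (hu : u ∈ MedInterval m k c) (hq : q ∈ MedInterval m u w) :
    q ∈ MedInterval m k (m c w q) := by
  rw [mem_medInterval]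
  conv_rhs => rw [← hq, ← hu]
  rw [hm.distrib k c u w q, hq]

lemma mem_medInterval_median_of_mem_join (hm : IsMedian m) {k₁ k₂ a z₁ z₂ t : M}
    (hz₁ : z₁ ∈ MedInterval m k₁ a) (hz₂ : z₂ ∈ MedInterval m k₂ a)
    (ht : t ∈ MedInterval m z₁ z₂) : t ∈ MedInterval m (m k₁ k₂ t) a := by
  have hs : m a z₂ t ∈ MedInterval m k₂ a := hm.medConvex_medInterval k₂ a a
    (hm.right_mem_medInterval k₂ a) z₂ hz₂ (hm.median_mem_medInterval a z₂ t)
  rw [hm.mem_medInterval_median_iff]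
  exact hm.mem_medInterval_of_mem_of_mem (hm.mem_medInterval_median_of_mem_medInterval hz₁ ht)
    (hm.median_mem_medInterval_of_mem hs t)

lemma median_median_mem_medInterval (hm : IsMedian m) {a b w : M}
    (hw : w ∈ MedInterval m a b) (q : M) : w ∈ MedInterval m (m a w q) (m b w q) := by
  have hbwq : m q (m b w q) w = m b w q := by
    rw [hm.comm_left q (m b w q) w, hm.distrib b w q q w, hm.majority_mid w q, hm.majority q w]
  have hswap : m a w (m b w q) = m b w (m a w q) := by
    rw [hm.rotate a w (m b w q), hm.distrib b w q a w, hm.majority_mid w a, hm.comm_left q a w,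
      hm.comm_right a q w]
  have hab : m b w (m a w q) ∈ MedInterval m a b := hm.medConvex_medInterval a b b
    (hm.right_mem_medInterval a b) w hw (hm.median_mem_medInterval b w _)
  have hwa : m b w (m a w q) ∈ MedInterval m w a := by
    rw [hm.medInterval_comm, ← hswap]
    exact hm.median_mem_medInterval a w _
  have hmed := hm.eq_median_of_mem_medInterval hab (hm.median_mem_medInterval b w _) hwa
  calc m (m a w q) (m b w q) w = m a w (m b w q) := by
        rw [hm.distrib a w q (m b w q) w, hm.majority_mid w (m b w q), hbwq]
    _ = m a b w := hswap.trans hmed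
    _ = w := hw

lemma median_mem_medInterval_of_mem_joins (hm : IsMedian m) {k₁ k₂ a b u₁ u₂ w : M}
    (hu₁ : u₁ ∈ MedInterval m k₁ a) (hu₂ : u₂ ∈ MedInterval m k₂ b) (hw : w ∈ MedInterval m a b) :
    m u₁ u₂ w ∈ MedInterval m (m k₁ k₂ (m u₁ u₂ w)) w := by
  have hq₁ : m u₁ u₂ w ∈ MedInterval m u₁ w := hm.median_mem_medInterval_left u₁ u₂ w
  have hq₂ : m u₁ u₂ w ∈ MedInterval m u₂ w := by
    rw [hm.comm_left u₁ u₂]; exact hm.median_mem_medInterval_left u₂ u₁ w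
  generalize m u₁ u₂ w = q at hq₁ hq₂ ⊢
  have h₂ : m k₂ w q ∈ MedInterval m q (m a w q) := by
    have e : m k₂ (m (m a w q) (m b w q) w) q = m (m a w q) q (m k₂ w q) := by
      rw [hm.comm_left k₂ _ q, hm.distrib (m a w q) (m b w q) w k₂ q,
        hm.comm_left (m b w q) k₂ q, hm.mem_medInterval_median_of_mem_medInterval hu₂ hq₂,
        hm.comm_left w k₂ q]
    rw [hm.median_median_mem_medInterval hw q] at e
    rw [hm.medInterval_comm]
    exact e.symm
  rw [hm.mem_medInterval_median_iff]
  exact hm.mem_medInterval_of_mem_of_mem (hm.mem_medInterval_median_of_mem_medInterval hu₁ hq₁) h₂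

end IsMedian

end MedianAlgebra

section Convexity

variable {M : Type*} {m : M → M → M → M}

lemma subset_medJoin (hm : IsMedian m) (K : Set M) (x : M) : K ⊆ MedJoin m K x :=
  fun k hk => ⟨k, hk, hm.left_mem_medInterval k x⟩

lemma mem_medJoin (hm : IsMedian m) {K : Set M} (hK : K.Nonempty) (x : M) : x ∈ MedJoin m K x :=
  let ⟨k, hk⟩ := hK
  ⟨k, hk, hm.right_mem_medInterval k x⟩

lemma MedConvex.medJoin (hm : IsMedian m) {K : Set M} (hK : MedConvex m K) (x : M) :
    MedConvex m (MedJoin m K x) := by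
  rintro z₁ ⟨k₁, hk₁, hz₁⟩ z₂ ⟨k₂, hk₂, hz₂⟩ t ht
  exact ⟨m k₁ k₂ t, hK k₁ hk₁ k₂ hk₂ (hm.median_mem_medInterval k₁ k₂ t),
    hm.mem_medInterval_median_of_mem_join hz₁ hz₂ ht⟩

lemma MedConvex.compl_of_inter_medJoin_nonempty (hm : IsMedian m) {U K : Set M}
    (hK : MedConvex m K) (hU : MedConvex m U) (hUK : Disjoint U K)
    (hjoin : ∀ x ∉ K, (U ∩ MedJoin m K x).Nonempty) : MedConvex m Kᶜ := by
  intro a ha b hb w hw hwK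
  obtain ⟨u₁, hu₁, k₁, hk₁, hu₁a⟩ := hjoin a ha
  obtain ⟨u₂, hu₂, k₂, hk₂, hu₂b⟩ := hjoin b hb
  have hqU : m u₁ u₂ w ∈ U := hU u₁ hu₁ u₂ hu₂ (hm.median_mem_medInterval u₁ u₂ w)
  have hkK : m k₁ k₂ (m u₁ u₂ w) ∈ K := hK k₁ hk₁ k₂ hk₂ (hm.median_mem_medInterval _ _ _)
  have hqK : m u₁ u₂ w ∈ K :=
    hK _ hkK w hwK (hm.median_mem_medInterval_of_mem_joins hu₁a hu₂b hw)
  exact Set.disjoint_left.mp hUK hqU hqK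

lemma MedConvex.sUnion_of_isChain {c : Set (Set M)} (hc : IsChain (· ⊆ ·) c)
    (h : ∀ K ∈ c, MedConvex m K) : MedConvex m (⋃₀ c) := by
  rintro x ⟨K₁, hK₁, hx⟩ y ⟨K₂, hK₂, hy⟩ w hw
  rcases hc.total hK₁ hK₂ with h₁₂ | h₂₁
  · exact ⟨K₂, hK₂, h K₂ hK₂ x (h₁₂ hx) y hy hw⟩
  · exact ⟨K₁, hK₁, h K₁ hK₁ x hx y (h₂₁ hy) hw⟩

lemma MedConvex.closure [TopologicalSpace M] (hm : IsMedian m)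
    (hcont : Continuous fun p : M × M × M => m p.1 p.2.1 p.2.2) {K : Set M}
    (hK : MedConvex m K) : MedConvex m (_root_.closure K) := by
  intro x hx y hy w hw
  have hmap : m x y w ∈ _root_.closure K :=
    map_mem_closure₂ (f := fun a b => m a b w)
      (hcont.comp (continuous_fst.prodMk (continuous_snd.prodMk continuous_const))) hx hy
      fun a ha b hb => hK a ha b hb (hm.median_mem_medInterval a b w)
  rwa [hw] at hmap

end Convexity

section Separation

variable {M : Type*} [TopologicalSpace M] {m : M → M → M → M}

lemma exists_maximal_isClosed_medConvex_disjoint (hm : IsMedian m)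
    (hcont : Continuous fun p : M × M × M => m p.1 p.2.1 p.2.2) {U C : Set M} (hU : IsOpen U)
    (hC : IsClosed C) (hCc : MedConvex m C) (hUC : Disjoint U C) :
    ∃ K, C ⊆ K ∧ Maximal (fun K => IsClosed K ∧ MedConvex m K ∧ Disjoint U K) K := by
  refine zorn_subset_nonempty _ (fun c hcS hc _ => ?_) C ⟨hC, hCc, hUC⟩
  refine ⟨closure (⋃₀ c), ⟨isClosed_closure, ?_, ?_⟩,
    fun K hK => (Set.subset_sUnion_of_mem hK).trans subset_closure⟩
  · exact (MedConvex.sUnion_of_isChain hc fun K hK => (hcS hK).2.1).closure hm hcont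
  · exact (Set.disjoint_sUnion_right.mpr fun K hK => (hcS hK).2.2).closure_right hU

lemma inter_medJoin_nonempty_of_maximal (hm : IsMedian m)
    (hcont : Continuous fun p : M × M × M => m p.1 p.2.1 p.2.2) {U K : Set M} (hU : IsOpen U)
    (hK : Maximal (fun K => IsClosed K ∧ MedConvex m K ∧ Disjoint U K) K) (hKne : K.Nonempty)
    {x : M} (hx : x ∉ K) : (U ∩ MedJoin m K x).Nonempty := by
  rw [← Set.not_disjoint_iff_nonempty_inter]
  intro hUJ
  have hJK : closure (MedJoin m K x) ⊆ K :=
    hK.2 ⟨isClosed_closure, (hK.1.2.1.medJoin hm x).closure hm hcont, hUJ.closure_right hU⟩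
      ((subset_medJoin hm K x).trans subset_closure)
  exact hx (hJK (subset_closure (mem_medJoin hm hKne x)))

end Separation

theorem stmt9_general {M : Type*} [TopologicalSpace M]
    (m : M → M → M → M) (hm : IsMedian m)
    (hcont : Continuous fun p : M × M × M => m p.1 p.2.1 p.2.2)
    (U C : Set M) (hU : IsOpen U) (hCcl : IsClosed C)
    (hUc : MedConvex m U) (hCc : MedConvex m C)
    (hUn : U.Nonempty) (hCn : C.Nonempty) (hdisj : Disjoint U C) :
    ∃ h : Set M, IsHalfSpace m h ∧ IsOpen h ∧ U ⊆ h ∧ C ⊆ hᶜ := by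
  obtain ⟨K, hCK, hK⟩ := exists_maximal_isClosed_medConvex_disjoint hm hcont hU hCcl hCc hdisj
  obtain ⟨hKcl, hKc, hUK⟩ := hK.1
  have hKcc : MedConvex m Kᶜ := hKc.compl_of_inter_medJoin_nonempty hm hUc hUK
    fun _ hx => inter_medJoin_nonempty_of_maximal hm hcont hU hK (hCn.mono hCK) hx
  refine ⟨Kᶜ, ⟨hKcc, ?_, hUn.mono hUK.subset_compl_right, ?_⟩, hKcl.isOpen_compl,
    hUK.subset_compl_right, ?_⟩ <;> rw [compl_compl]
  exacts [hKc, hCn.mono hCK, hCK]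

theorem stmt9 {M : Type*} [TopologicalSpace M] [T2Space M] [CompactSpace M]
    (m : M → M → M → M) (hm : IsMedian m)
    (hcont : Continuous fun p : M × M × M => m p.1 p.2.1 p.2.2)
    (hloc : LocOpenConvex m)
    (U C : Set M) (hU : IsOpen U) (hCcl : IsClosed C)
    (hUc : MedConvex m U) (hCc : MedConvex m C)
    (hUn : U.Nonempty) (hCn : C.Nonempty) (hdisj : Disjoint U C) :
    ∃ h : Set M, IsHalfSpace m h ∧ IsOpen h ∧ U ⊆ h ∧ C ⊆ hᶜ :=
  stmt9_general m hm hcont U C hU hCcl hUc hCc hUn hCn hdisj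
end

section
/- Let M be a median algebra with a σ-algebra making m Borel-measurable, let μ be a balanced probability measure on M, and let 𝔥 be a measurable half-space of M. Then μ(𝔥) ∈ {0, 1/2, 1}. -/
open MeasureTheory

noncomputable def selfMedian {M : Type*} [MeasurableSpace M] (m : M → M → M → M)
    (μ : Measure M) : Measure M :=
  Measure.map (fun p : M × M × M => m p.1 p.2.1 p.2.2) (μ.prod (μ.prod μ))

/-!
The characteristic function of a half-space `h` is a median morphism to `{0, 1}`: `m x y z ∈ h`
iff at least two of `x, y, z` lie in `h`. Hence, for `p = μ h`, the self-median of `μ` gives `h`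
mass `p³ + 3p²(1 - p)`, and balancedness forces `p = 3p² - 2p³`, i.e. `p (2p - 1)(p - 1) = 0`.
-/

def majority {α : Type*} (s : Set α) : Set (α × α × α) :=
  {p | (p.1 ∈ s ∧ p.2.1 ∈ s) ∨ (p.1 ∈ s ∧ p.2.2 ∈ s) ∨ (p.2.1 ∈ s ∧ p.2.2 ∈ s)}

section MedianAlgebra

variable {M : Type*} {m : M → M → M → M}

lemma IsMedian.median_median_right (hm : IsMedian m) (x y z : M) :
    m x y (m x y z) = m x y z := by
  obtain ⟨hcomm₂₃, -, hidem, hdistrib⟩ := hm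
  have h := hdistrib x x y y z
  rw [hidem, hidem] at h
  rw [hcomm₂₃, ← h]

lemma MedConvex.median_mem (hm : IsMedian m) {C : Set M} (hC : MedConvex m C)
    {x y : M} (hx : x ∈ C) (hy : y ∈ C) (z : M) : m x y z ∈ C :=
  hC x hx y hy (hm.median_median_right x y z)

lemma MedConvex.median_mem_of_majority (hm : IsMedian m) {C : Set M} (hC : MedConvex m C)
    {x y z : M} (hxyz : (x, y, z) ∈ majority C) : m x y z ∈ C := by
  rcases hxyz with ⟨hx, hy⟩ | ⟨hx, hz⟩ | ⟨hy, hz⟩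
  · exact hC.median_mem hm hx hy z
  · rw [hm.1]
    exact hC.median_mem hm hx hz y
  · rw [hm.2.1, hm.1]
    exact hC.median_mem hm hy hz x

lemma preimage_median_eq_majority (hm : IsMedian m) {h : Set M}
    (hconv : MedConvex m h) (hconv_compl : MedConvex m hᶜ) :
    (fun p : M × M × M => m p.1 p.2.1 p.2.2) ⁻¹' h = majority h := by
  ext ⟨x, y, z⟩
  refine ⟨fun hmem => ?_, hconv.median_mem_of_majority hm⟩
  by_contra hnot
  refine hconv_compl.median_mem_of_majority hm ?_ hmem
  simp only [majority, Set.mem_ofPred_eq, Set.mem_compl_iff] at hnot ⊢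
  tauto

end MedianAlgebra

lemma measureReal_majority {α : Type*} [MeasurableSpace α] (μ : Measure α)
    [IsProbabilityMeasure μ] {s : Set α} (hs : MeasurableSet s) :
    (μ.prod (μ.prod μ)).real (majority s) = μ.real s ^ 2 * (3 - 2 * μ.real s) := by
  have hsplit : majority s = s ×ˢ (sᶜ ×ˢ sᶜ)ᶜ ∪ sᶜ ×ˢ (s ×ˢ s) := by
    ext ⟨x, y, z⟩
    simp only [majority, Set.mem_ofPred_eq, Set.mem_union, Set.mem_prod, Set.mem_compl_iff]
    tauto
  have hdisj : Disjoint (s ×ˢ (sᶜ ×ˢ sᶜ)ᶜ) (sᶜ ×ˢ (s ×ˢ s)) :=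
    Set.disjoint_prod.2 (Or.inl disjoint_compl_right)
  rw [hsplit, measureReal_union hdisj (hs.compl.prod (hs.prod hs)), measureReal_prod_prod,
    measureReal_prod_prod, probReal_compl_eq_one_sub (hs.compl.prod hs.compl),
    measureReal_prod_prod, measureReal_prod_prod, probReal_compl_eq_one_sub hs]
  ring

lemma eq_zero_or_eq_half_or_eq_one_of_eq_sq_mul {p : ℝ} (hp : p = p ^ 2 * (3 - 2 * p)) :
    p = 0 ∨ p = 1 / 2 ∨ p = 1 := by
  have hfactor : p * ((2 * p - 1) * (p - 1)) = 0 := by linear_combination hp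
  rcases mul_eq_zero.1 hfactor with h0 | h
  · exact Or.inl h0
  rcases mul_eq_zero.1 h with h2 | h1
  · exact Or.inr (Or.inl (by linarith))
  · exact Or.inr (Or.inr (by linarith))

theorem stmt12 {M : Type*} [MeasurableSpace M]
    (m : M → M → M → M) (hm : IsMedian m)
    (hmeas : Measurable fun p : M × M × M => m p.1 p.2.1 p.2.2)
    (μ : Measure M) [IsProbabilityMeasure μ] (hbal : selfMedian m μ = μ)
    (h : Set M) (hhs : IsHalfSpace m h) (hhm : MeasurableSet h) :
    μ h = 0 ∨ μ h = (2 : ENNReal)⁻¹ ∨ μ h = 1 := by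
  have hfixed : μ.real h = μ.real h ^ 2 * (3 - 2 * μ.real h) := by
    conv_lhs => rw [← hbal]
    rw [selfMedian, map_measureReal_apply hmeas hhm,
      preimage_median_eq_majority hm hhs.1 hhs.2.1, measureReal_majority μ hhm]
  rw [← ofReal_measureReal]
  rcases eq_zero_or_eq_half_or_eq_one_of_eq_sq_mul hfixed with hp | hp | hp <;> rw [hp]
  · exact Or.inl ENNReal.ofReal_zero
  · exact Or.inr (Or.inl (by rw [one_div, ENNReal.ofReal_inv_of_pos two_pos]; simp))
  · exact Or.inr (Or.inr ENNReal.ofReal_one)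
end
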